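/- arXiv:2505.00440 — 3 statements merged into one kernel-verified Lean document; each statement's English description precedes it below -/
import Mathlib

section
/- For d ∈ ℕ and M ≥ 2, the (d+1)-dimensional hyperbolic cross decomposes as |A_{d+1}(M)| = |A_d(M)| + 2 ∑_{k=1}^{⌊M⌋} |A_d(M/k)|. -/
/-!
Writing `w(h) = ∏ⱼ max(|hⱼ|, 1)`, membership in `A_d(M)` reads `w(h) ≤ M`, and `w` is
multiplicative under appending a coordinate: `w(g, m) = w(g) · max(|m|, 1)`. So the fibre of
`A_{d+1}(M)` over the last coordinate `m` is a copy of `A_d(M / max(|m|, 1))`, which is empty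
unless `|m| ≤ ⌊M⌋`. Summing over `m ∈ [-⌊M⌋, ⌊M⌋]` and pairing `m` with `-m` gives the formula.
-/

/-- The unweighted hyperbolic cross `A_d(M)`. -/
def hyperbolicCross (d : ℕ) (M : ℝ) : Set (Fin d → ℤ) :=
  {h | ((∏ j ∈ Finset.univ.filter (fun j => h j ≠ 0), |h j| : ℤ) : ℝ) ≤ M}

open Finset

theorem Int.sum_Icc_natAbs {β : Type*} [AddCommMonoid β] (f : ℕ → β) (N : ℕ) :
    ∑ m ∈ Icc (-(N : ℤ)) N, f m.natAbs = f 0 + 2 • ∑ k ∈ Icc 1 N, f k := by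
  induction N with
  | zero => simp
  | succ N ih =>
    have hIcc : Icc (-((N + 1 : ℕ) : ℤ)) (N + 1 : ℕ)
        = insert (-((N + 1 : ℕ) : ℤ)) (insert ((N + 1 : ℕ) : ℤ) (Icc (-(N : ℤ)) N)) := by
      ext m; simp only [mem_Icc, mem_insert]; omega
    rw [hIcc, sum_insert (by simp; omega), sum_insert (by simp), ih,
      sum_Icc_succ_top (by omega), Int.natAbs_neg, Int.natAbs_natCast]
    simp only [smul_add, two_smul]
    abel

namespace HyperbolicCross

def weight {d : ℕ} (h : Fin d → ℤ) : ℕ := ∏ j, max (h j).natAbs 1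

theorem mem_iff {d : ℕ} {M : ℝ} {h : Fin d → ℤ} :
    h ∈ hyperbolicCross d M ↔ (weight h : ℝ) ≤ M := by
  have hweight : (∏ j ∈ univ.filter (fun j => h j ≠ 0), |h j| : ℤ) = weight h := by
    rw [prod_filter, weight, Nat.cast_prod]
    refine prod_congr rfl fun j _ => ?_
    rcases eq_or_ne (h j) 0 with hj | hj
    · simp [hj]
    · rw [if_pos hj, Nat.cast_max, Int.natCast_natAbs, Nat.cast_one,
        max_eq_left (Int.one_le_abs hj)]
  rw [hyperbolicCross, Set.mem_ofPred_eq, hweight, Int.cast_natCast]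

theorem natAbs_le_weight {d : ℕ} (h : Fin d → ℤ) (j : Fin d) : (h j).natAbs ≤ weight h :=
  (le_max_left _ _).trans <| Nat.le_of_dvd (prod_pos fun _ _ => by omega) <|
    dvd_prod_of_mem _ (mem_univ j)

theorem weight_snoc {d : ℕ} (g : Fin d → ℤ) (m : ℤ) :
    weight (Fin.snoc g m : Fin (d + 1) → ℤ) = weight g * max m.natAbs 1 := by
  simp [weight, Fin.prod_univ_castSucc]

theorem natAbs_le_floor_of_mem {d : ℕ} {M : ℝ} {h : Fin d → ℤ}
    (hh : h ∈ hyperbolicCross d M) (j : Fin d) : (h j).natAbs ≤ ⌊M⌋₊ :=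
  Nat.le_floor <| (Nat.cast_le.mpr (natAbs_le_weight h j)).trans (mem_iff.mp hh)

theorem finite (d : ℕ) (M : ℝ) : (hyperbolicCross d M).Finite := by
  refine (Set.finite_Icc (-(⌊M⌋₊ : Fin d → ℤ)) ⌊M⌋₊).subset fun h hh => ?_
  have hbound (j : Fin d) : -(⌊M⌋₊ : ℤ) ≤ h j ∧ h j ≤ ⌊M⌋₊ := by
    have := natAbs_le_floor_of_mem hh j
    omega
  exact ⟨fun j => (hbound j).1, fun j => (hbound j).2⟩

instance (d : ℕ) (M : ℝ) : Finite (hyperbolicCross d M) := (finite d M).to_subtype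

theorem snoc_mem_iff {d : ℕ} {M : ℝ} (g : Fin d → ℤ) (m : ℤ) :
    (Fin.snoc g m : Fin (d + 1) → ℤ) ∈ hyperbolicCross (d + 1) M ↔
      g ∈ hyperbolicCross d (M / (max m.natAbs 1 : ℕ)) := by
  rw [mem_iff, mem_iff, weight_snoc, Nat.cast_mul, le_div_iff₀ (by positivity)]

theorem card_succ_eq_sum (d : ℕ) (M : ℝ) :
    Nat.card (hyperbolicCross (d + 1) M) = ∑ m ∈ Icc (-(⌊M⌋₊ : ℤ)) ⌊M⌋₊,
      Nat.card (hyperbolicCross d (M / (max m.natAbs 1 : ℕ))) := by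
  let fibre (m : ℤ) := hyperbolicCross d (M / (max m.natAbs 1 : ℕ))
  have hfibre (m : ℤ) (g : fibre m) : m ∈ Icc (-(⌊M⌋₊ : ℤ)) ⌊M⌋₊ := by
    have := natAbs_le_floor_of_mem ((snoc_mem_iff g.1 m).mpr g.2) (Fin.last d)
    rw [Fin.snoc_last] at this
    rw [mem_Icc]; omega
  let e : hyperbolicCross (d + 1) M ≃ Σ m : Icc (-(⌊M⌋₊ : ℤ)) ⌊M⌋₊, fibre m :=
    ((Fin.snocEquiv fun _ => ℤ).symm.subtypeEquiv fun h => by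
        conv_lhs => rw [← Fin.snoc_init_self h]
        exact snoc_mem_iff _ _).trans <|
      (Equiv.subtypeProdEquivSigmaSubtype fun m g => g ∈ fibre m).trans <|
      (Equiv.sigmaSubtypeEquivOfSubset _ _ hfibre).symm
  rw [Nat.card_congr e, Nat.card_sigma]
  exact sum_coe_sort _ fun m => Nat.card (fibre m)

end HyperbolicCross

theorem hyperbolicCross_card_succ_general (d : ℕ) (M : ℝ) :
    Nat.card (hyperbolicCross (d + 1) M)
      = Nat.card (hyperbolicCross d M)
        + 2 * ∑ k ∈ Finset.Icc 1 ⌊M⌋₊, Nat.card (hyperbolicCross d (M / k)) := by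
  rw [HyperbolicCross.card_succ_eq_sum,
    Int.sum_Icc_natAbs (fun k => Nat.card (hyperbolicCross d (M / (max k 1 : ℕ)))), smul_eq_mul]
  congr 2
  · simp
  · exact sum_congr rfl fun k hk => by rw [max_eq_left (mem_Icc.mp hk).1]

/-- The decomposition `|A_{d+1}(M)| = |A_d(M)| + 2 ∑_{k=1}^{⌊M⌋} |A_d(M/k)|`
for `M ≥ 2`, splitting according to the last coordinate. -/
theorem hyperbolicCross_card_succ (d : ℕ) (M : ℝ) (hM : 2 ≤ M) :
    Nat.card (hyperbolicCross (d + 1) M)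
      = Nat.card (hyperbolicCross d M)
        + 2 * ∑ k ∈ Finset.Icc 1 ⌊M⌋₊, Nat.card (hyperbolicCross d (M / k)) :=
  hyperbolicCross_card_succ_general d M
end

section
/- Let α > 1/2, 1/2 < λ < α, d ∈ ℕ, and weights γ_u ∈ (0,1] for u ⊆ {1,…,d}, with r_{α,γ}(h) := γ_{supp(h)}^{-1} ∏_{j∈supp(h)} |h_j|^α. Then for every M > 0, the weighted hyperbolic cross A_{d,α,γ}(M) := { h ∈ ℤ^d : r_{α,γ}(h) ≤ M } satisfies |A_{d,α,γ}(M)| ≤ M^{1/λ} · ∑_{u ⊆ {1,…,d}} γ_u^{1/λ} (2ζ(α/λ))^{|u|}, where ζ is the Riemann zeta function. -/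
/-!
Every `h` in the cross has weight `(M / r h) ^ (1 / λ) ≥ 1`, so the cross has at most as many
points as the total weight of `ℤ^d`. Grouped by the support `u` of `h`, the weight
`r h ^ (-1 / λ) = γ_u ^ (1 / λ) ∏_{j ∈ u} |h_j| ^ (-α / λ)` factorizes over the coordinates in `u`,
each contributing `∑_{n ≠ 0} |n| ^ (-α / λ) = 2 ζ(α / λ)`, which is finite as `α / λ > 1`.
Bounding the weight of every finite subset of the cross makes its finiteness unnecessary.
-/

open Finset

theorem natCard_le_of_one_le_of_sum_le {α : Type*} {S : Set α} {g : α → ℝ} {B : ℝ}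
    (hg : ∀ x ∈ S, 1 ≤ g x) (hsum : ∀ F : Finset α, ↑F ⊆ S → ∑ x ∈ F, g x ≤ B) :
    (Nat.card S : ℝ) ≤ B := by
  rcases S.finite_or_infinite with hS | hS
  · rw [Nat.card_coe_set_eq, Set.ncard_eq_toFinset_card S hS, ← nsmul_one, ← sum_const]
    refine (sum_le_sum fun x hx => hg x ?_).trans (hsum _ ?_) <;> simp_all
  · have := hS.to_subtype
    simpa [Nat.card_eq_zero_of_infinite] using hsum ∅ (by simp)

theorem one_le_rpow_mul_rpow_neg {x y p : ℝ} (hx : 0 < x) (hxy : x ≤ y) (hp : 0 ≤ p) :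
    1 ≤ y ^ p * x ^ (-p) := by
  rw [Real.rpow_neg hx.le, ← div_eq_mul_inv, one_le_div (by positivity)]
  exact Real.rpow_le_rpow hx.le hxy hp

theorem inv_mul_prod_rpow_rpow_neg {ι : Type*} (s : Finset ι) {c : ℝ} (hc : 0 < c) {a : ι → ℝ}
    (ha : ∀ j ∈ s, 0 ≤ a j) (α p : ℝ) :
    (c⁻¹ * ∏ j ∈ s, a j ^ α) ^ (-p) = c ^ p * ∏ j ∈ s, a j ^ (-(α * p)) := by
  have hprod : 0 ≤ ∏ j ∈ s, a j ^ α := prod_nonneg fun j hj => Real.rpow_nonneg (ha j hj) _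
  rw [Real.mul_rpow (inv_nonneg.2 hc.le) hprod, Real.inv_rpow hc.le, ← Real.rpow_neg hc.le,
    neg_neg, ← Real.finsetProd_rpow _ _ fun j hj => Real.rpow_nonneg (ha j hj) _]
  congr 1
  refine prod_congr rfl fun j hj => ?_
  rw [← Real.rpow_mul (ha j hj), mul_neg]

theorem one_le_rpow_mul_of_inv_mul_prod_rpow_le {ι : Type*} (s : Finset ι) {c : ℝ} (hc : 0 < c)
    {a : ι → ℝ} (ha : ∀ j ∈ s, 0 < a j) {α p M : ℝ} (hp : 0 ≤ p)
    (hle : c⁻¹ * ∏ j ∈ s, a j ^ α ≤ M) :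
    1 ≤ M ^ p * (c ^ p * ∏ j ∈ s, a j ^ (-(α * p))) := by
  have hpos : 0 < c⁻¹ * ∏ j ∈ s, a j ^ α :=
    mul_pos (inv_pos.2 hc) (prod_pos fun j hj => Real.rpow_pos_of_pos (ha j hj) _)
  rw [← inv_mul_prod_rpow_rpow_neg s hc (fun j hj => (ha j hj).le)]
  exact one_le_rpow_mul_rpow_neg hpos hle hp

theorem sum_piFinset_mul_prod_support {ι β R : Type*} [Fintype ι] [DecidableEq ι] [Zero β]
    [DecidableEq β] [CommSemiring R] {T : Finset β} (hT : 0 ∈ T) (c : Finset ι → R) (w : β → R) :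
    ∑ x ∈ Fintype.piFinset fun _ : ι => T,
        c (univ.filter fun j => x j ≠ 0) * ∏ j ∈ univ.filter (fun j => x j ≠ 0), w (x j) =
      ∑ u, c u * (∑ n ∈ T.erase 0, w n) ^ u.card := by
  -- `∏ j, W u j (x j)` vanishes unless `x` has support `u`, so each fibre sum is a product.
  let W : Finset ι → ι → β → R := fun u j n =>
    if n = 0 then (if j ∈ u then 0 else 1) else (if j ∈ u then w n else 0)
  have hprod : ∀ u (x : ι → β), ∏ j, W u j (x j) =
      if (univ.filter fun j => x j ≠ 0) = u then ∏ j ∈ u, w (x j) else 0 := by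
    intro u x
    split_ifs with hu
    · rw [← Fintype.prod_ite_mem u]
      refine prod_congr rfl fun j _ => ?_
      by_cases hj : x j = 0 <;> simp [W, hj, ← hu]
    · obtain ⟨j, hj⟩ := not_forall.1 (mt Finset.ext hu)
      refine prod_eq_zero (mem_univ j) ?_
      by_cases hx : x j = 0 <;> simp_all [W]
  have hsum : ∀ u j, ∑ n ∈ T, W u j n = if j ∈ u then ∑ n ∈ T.erase 0, w n else 1 := by
    intro u j
    rw [← add_sum_erase _ _ hT, sum_congr rfl fun n hn => if_neg (ne_of_mem_erase hn)]
    by_cases hj : j ∈ u <;> simp [W, hj]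
  calc _ = ∑ x ∈ Fintype.piFinset fun _ : ι => T, ∑ u,
        c u * if (univ.filter fun j => x j ≠ 0) = u then ∏ j ∈ u, w (x j) else 0 := by
        refine sum_congr rfl fun x _ => ?_
        simp only [mul_ite, mul_zero, sum_ite_eq, mem_univ, if_true]
    _ = ∑ u, c u * ∏ j, ∑ n ∈ T, W u j n := by
        rw [sum_comm]
        simp only [prod_univ_sum, hprod, mul_sum]
    _ = _ := by simp only [hsum, Fintype.prod_ite_mem, prod_const]

theorem hasSum_int_abs_rpow_neg {s : ℝ} (hs : 1 < s) :
    HasSum (fun n : ℤ => ((|n| : ℤ) : ℝ) ^ (-s)) (2 * ∑' m : ℕ, ((m : ℝ) + 1) ^ (-s)) := by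
  have hsum : Summable fun m : ℕ => ((m : ℝ) + 1) ^ (-s) := by
    simpa using (summable_nat_add_iff 1).2 (Real.summable_nat_rpow.2 (by linarith : -s < -1))
  have hsucc : ∀ m : ℕ, ((|(m : ℤ) + 1| : ℤ) : ℝ) = m + 1 := fun m => by
    rw [abs_of_nonneg (by positivity)]; push_cast; rfl
  have hpos : HasSum (fun n : ℕ => (((|(n : ℤ)|) : ℤ) : ℝ) ^ (-s))
      (∑' m : ℕ, ((m : ℝ) + 1) ^ (-s)) := by
    rw [← hasSum_nat_add_iff' 1, sum_range_one]
    simpa only [Nat.cast_add, Nat.cast_one, hsucc, Nat.cast_zero, abs_zero, Int.cast_zero,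
      Real.zero_rpow (by linarith : -s ≠ 0), sub_zero] using hsum.hasSum
  have hneg : HasSum (fun n : ℕ => (((|(-((n : ℤ) + 1))|) : ℤ) : ℝ) ^ (-s))
      (∑' m : ℕ, ((m : ℝ) + 1) ^ (-s)) := by
    simpa only [abs_neg, hsucc] using hsum.hasSum
  rw [two_mul]
  exact hpos.of_nat_of_neg_add_one hneg

theorem weighted_hyperbolic_cross_bound_general (d : ℕ) (α lam : ℝ)
    (hlam1 : 1 / 2 < lam) (hlam2 : lam < α)
    (γ : Finset (Fin d) → ℝ) (hγ : ∀ u, 0 < γ u ∧ γ u ≤ 1)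
    (r : (Fin d → ℤ) → ℝ)
    (hr : ∀ h : Fin d → ℤ,
      r h = (γ (Finset.univ.filter fun j => h j ≠ 0))⁻¹ *
        ∏ j ∈ Finset.univ.filter (fun j => h j ≠ 0), ((|h j| : ℤ) : ℝ) ^ α)
    (M : ℝ) (hM : 0 < M) :
    (Nat.card {h : Fin d → ℤ | r h ≤ M} : ℝ)
      ≤ M ^ (1 / lam) * ∑ u : Finset (Fin d),
          γ u ^ (1 / lam) * (2 * ∑' m : ℕ, ((m : ℝ) + 1) ^ (-(α / lam))) ^ u.card := by
  have hlam : 0 < lam := by linarith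
  set w : ℤ → ℝ := fun n => ((|n| : ℤ) : ℝ) ^ (-(α / lam))
  have hw : HasSum w (2 * ∑' m : ℕ, ((m : ℝ) + 1) ^ (-(α / lam))) :=
    hasSum_int_abs_rpow_neg ((one_lt_div hlam).2 hlam2)
  have hw0 : ∀ n, 0 ≤ w n := fun n => Real.rpow_nonneg (by positivity) _
  set f : (Fin d → ℤ) → ℝ := fun h =>
    M ^ (1 / lam) * (γ (univ.filter fun j => h j ≠ 0) ^ (1 / lam) *
      ∏ j ∈ univ.filter (fun j => h j ≠ 0), w (h j))
  have hf0 : ∀ h, 0 ≤ f h := fun h => by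
    have := (hγ (univ.filter fun j => h j ≠ 0)).1
    exact mul_nonneg (by positivity) (mul_nonneg (by positivity) (prod_nonneg fun j _ => hw0 _))
  have hf1 : ∀ h, r h ≤ M → 1 ≤ f h := fun h hh => by
    rw [hr] at hh
    have := one_le_rpow_mul_of_inv_mul_prod_rpow_le (p := 1 / lam) _ (hγ _).1
      (fun j hj => by exact_mod_cast abs_pos.2 (mem_filter.1 hj).2) (by positivity) hh
    rwa [mul_one_div] at this
  refine natCard_le_of_one_le_of_sum_le hf1 fun F _ => ?_
  set T : Finset ℤ := insert 0 (F.biUnion fun h => univ.image h)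
  calc ∑ h ∈ F, f h ≤ ∑ h ∈ Fintype.piFinset fun _ => T, f h := by
        refine sum_le_sum_of_subset_of_nonneg (fun h hh => ?_) fun h _ _ => hf0 h
        exact Fintype.mem_piFinset.2 fun j => mem_insert_of_mem (mem_biUnion.2 ⟨h, hh, by simp⟩)
    _ = M ^ (1 / lam) * ∑ u, γ u ^ (1 / lam) * (∑ n ∈ T.erase 0, w n) ^ u.card := by
        rw [← sum_piFinset_mul_prod_support (mem_insert_self 0 _), mul_sum]
    _ ≤ _ := by
        gcongr with u
        · exact (Real.rpow_pos_of_pos (hγ u).1 _).le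
        · exact sum_le_hasSum _ (fun n _ => hw0 n) hw

/-- Bound on the weighted hyperbolic cross:
`|A_{d,α,γ}(M)| ≤ M^{1/λ} ∑_{u ⊆ {1,…,d}} γ_u^{1/λ} (2 ζ(α/λ))^{|u|}`
for `1/2 < λ < α`, where `ζ(s) = ∑_{m ≥ 1} m^{-s}` is the Riemann zeta function. -/
theorem weighted_hyperbolic_cross_bound (d : ℕ) (α lam : ℝ)
    (hα : 1 / 2 < α) (hlam1 : 1 / 2 < lam) (hlam2 : lam < α)
    (γ : Finset (Fin d) → ℝ) (hγ : ∀ u, 0 < γ u ∧ γ u ≤ 1)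
    (r : (Fin d → ℤ) → ℝ)
    (hr : ∀ h : Fin d → ℤ,
      r h = (γ (Finset.univ.filter fun j => h j ≠ 0))⁻¹ *
        ∏ j ∈ Finset.univ.filter (fun j => h j ≠ 0), ((|h j| : ℤ) : ℝ) ^ α)
    (M : ℝ) (hM : 0 < M) :
    (Nat.card {h : Fin d → ℤ | r h ≤ M} : ℝ)
      ≤ M ^ (1 / lam) * ∑ u : Finset (Fin d),
          γ u ^ (1 / lam) * (2 * ∑' m : ℕ, ((m : ℝ) + 1) ^ (-(α / lam))) ^ u.card :=
  weighted_hyperbolic_cross_bound_general d α lam hlam1 hlam2 γ hγ r hr M hM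
end

section
/- Let α > 1/2 and 1/2 < λ < α, with r_{α,γ} as in the weighted Korobov space and μ(λ) := ∑_{u⊆{1,…,d}} γ_u^{1/λ} (2ζ(α/λ))^{|u|}. Then for every M > 0, ∑_{h ∈ ℤ^d : r_{α,γ}(h) > M} r_{α,γ}(h)^{-2} ≤ M^{1/λ - 2} · μ(λ). -/
/-!
Since `1/λ < 2`, on the tail `r > M` we have `r⁻² = r^(-1/λ) r^(1/λ-2) ≤ M^(1/λ-2) r^(-1/λ)`,
so it suffices to bound every finite sum of `r^(-1/λ)` by `μ(λ)`. On vectors `h` with support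
`u`, `r(h)^(-1/λ) = γ_u^(1/λ) ∏_{j∈u} |h_j|^(-α/λ)`, and the sum of this product over such `h`
is at most a product of `|u|` factors `∑_{m≠0} |m|^(-α/λ) = 2ζ(α/λ)`, finite since `α/λ > 1`.
-/

open Finset

theorem tsum_abs_int_rpow_neg {s : ℝ} (hs : 1 < s) :
    ∑' m : ℤ, |(m : ℝ)| ^ (-s) = 2 * ∑' n : ℕ, ((n : ℝ) + 1) ^ (-s) := by
  rw [tsum_int_eq_zero_add_two_mul_tsum_pnat (fun n => by simp) (Real.summable_abs_int_rpow hs),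
    tsum_pnat_eq_tsum_succ (f := fun n : ℕ => |((n : ℤ) : ℝ)| ^ (-s))]
  push_cast
  -- the `m = 0` term vanishes because `0 ^ x = 0` for `x ≠ 0`
  simp [Real.zero_rpow (by linarith : -s ≠ 0),
    fun n : ℕ => abs_of_pos (n.cast_add_one_pos (α := ℝ))]

theorem sum_abs_int_rpow_neg_le {s : ℝ} (hs : 1 < s) (t : Finset ℤ) :
    ∑ m ∈ t, |(m : ℝ)| ^ (-s) ≤ 2 * ∑' n : ℕ, ((n : ℝ) + 1) ^ (-s) :=
  tsum_abs_int_rpow_neg hs ▸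
    (Real.summable_abs_int_rpow hs).sum_le_tsum t fun m _ => by positivity

theorem sum_prod_le_pow_card {ι β : Type*} [Fintype ι] [DecidableEq ι] [DecidableEq β]
    (b : β) {G : β → ℝ} (hG : ∀ m, 0 ≤ G m) {Z : ℝ} (hZ : ∀ t : Finset β, ∑ m ∈ t, G m ≤ Z)
    (u : Finset ι) (T : Finset (ι → β)) (hT : ∀ h ∈ T, ∀ j ∉ u, h j = b) :
    ∑ h ∈ T, ∏ j ∈ u, G (h j) ≤ Z ^ u.card := by
  let t : ι → Finset β := fun j => if j ∈ u then T.image (· j) else {b}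
  let F : ι → β → ℝ := fun j m => if j ∈ u then G m else 1
  have hTt : T ⊆ Fintype.piFinset t := fun h hh => Fintype.mem_piFinset.2 fun j => by
    by_cases hj : j ∈ u
    · simpa [t, hj] using mem_image_of_mem (· j) hh
    · simp [t, hj, hT h hh j hj]
  calc ∑ h ∈ T, ∏ j ∈ u, G (h j) = ∑ h ∈ T, ∏ j, F j (h j) := by
        simp only [F, prod_ite_mem, univ_inter]
    _ ≤ ∑ h ∈ Fintype.piFinset t, ∏ j, F j (h j) :=
        sum_le_sum_of_subset_of_nonneg hTt fun h _ _ =>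
          prod_nonneg fun j _ => by by_cases hj : j ∈ u <;> simp [F, hj, hG]
    _ = ∏ j, ∑ m ∈ t j, F j m := (prod_univ_sum t F).symm
    _ ≤ ∏ j, if j ∈ u then Z else 1 := by
        refine prod_le_prod (fun j _ => sum_nonneg fun m _ => ?_) fun j _ => ?_
        · by_cases hj : j ∈ u <;> simp [F, hj, hG]
        · by_cases hj : j ∈ u <;> simp [F, t, hj, hZ]
    _ = Z ^ u.card := by simp [prod_ite_mem]

theorem tsum_rpow_neg_of_lt_le {X : Type*} {f : X → ℝ} {M p q μ : ℝ} (hM : 0 < M) (hqp : q ≤ p)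
    (hf : ∀ T : Finset X, ∑ x ∈ T, f x ^ (-q) ≤ μ) :
    ∑' x : {x // M < f x}, f x ^ (-p) ≤ M ^ (q - p) * μ := by
  have hMqp : 0 ≤ M ^ (q - p) := by positivity
  have hμ : 0 ≤ μ := by simpa using hf ∅
  refine tsum_le_of_sum_le' (mul_nonneg hMqp hμ) fun S => ?_
  calc ∑ x ∈ S, f x ^ (-p) ≤ ∑ x ∈ S, M ^ (q - p) * f x ^ (-q) := by
        refine sum_le_sum fun x _ => ?_
        have hfx : 0 < f x := hM.trans x.2
        calc f x ^ (-p) = f x ^ (q - p) * f x ^ (-q) := by rw [← Real.rpow_add hfx]; ring_nf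
          _ ≤ M ^ (q - p) * f x ^ (-q) := mul_le_mul_of_nonneg_right
              (Real.rpow_le_rpow_of_nonpos hM x.2.le (sub_nonpos.2 hqp)) (by positivity)
    _ = M ^ (q - p) * ∑ x ∈ S.map (Function.Embedding.subtype _), f x ^ (-q) := by
        rw [sum_map, mul_sum]; rfl
    _ ≤ M ^ (q - p) * μ := mul_le_mul_of_nonneg_left (hf _) hMqp

section Korobov

variable {ι : Type*} [Fintype ι]

def nonzeroCoords (h : ι → ℤ) : Finset ι := univ.filter fun j => h j ≠ 0

noncomputable def korobovR (γ : Finset ι → ℝ) (α : ℝ) (h : ι → ℤ) : ℝ :=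
  (γ (nonzeroCoords h))⁻¹ * ∏ j ∈ nonzeroCoords h, ((|h j| : ℤ) : ℝ) ^ α

theorem korobovR_rpow_neg {γ : Finset ι → ℝ} {h : ι → ℤ} (hγ : 0 ≤ γ (nonzeroCoords h))
    (α p : ℝ) :
    korobovR γ α h ^ (-p) =
      γ (nonzeroCoords h) ^ p * ∏ j ∈ nonzeroCoords h, |(h j : ℝ)| ^ (-(α * p)) := by
  have habs : ∀ j ∈ nonzeroCoords h, 0 ≤ ((|h j| : ℤ) : ℝ) ^ α := fun j _ => by positivity
  rw [korobovR, Real.mul_rpow (inv_nonneg.2 hγ) (prod_nonneg habs), Real.inv_rpow hγ,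
    Real.rpow_neg hγ, inv_inv, ← Real.finsetProd_rpow _ _ habs]
  simp only [Int.cast_abs, ← Real.rpow_mul (abs_nonneg _), mul_neg]

theorem sum_korobovR_rpow_neg_le [DecidableEq ι] {γ : Finset ι → ℝ} (hγ : ∀ u, 0 ≤ γ u)
    {α p : ℝ} (hαp : 1 < α * p) (T : Finset (ι → ℤ)) :
    ∑ h ∈ T, korobovR γ α h ^ (-p) ≤
      ∑ u, γ u ^ p * (2 * ∑' n : ℕ, ((n : ℝ) + 1) ^ (-(α * p))) ^ u.card := by
  rw [← sum_fiberwise T nonzeroCoords]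
  refine sum_le_sum fun u _ => ?_
  calc ∑ h ∈ T with nonzeroCoords h = u, korobovR γ α h ^ (-p)
      = γ u ^ p * ∑ h ∈ T with nonzeroCoords h = u, ∏ j ∈ u, |(h j : ℝ)| ^ (-(α * p)) := by
        rw [mul_sum]
        refine sum_congr rfl fun h hh => ?_
        rw [← (mem_filter.1 hh).2, korobovR_rpow_neg (hγ _)]
    _ ≤ γ u ^ p * (2 * ∑' n : ℕ, ((n : ℝ) + 1) ^ (-(α * p))) ^ u.card := by
        refine mul_le_mul_of_nonneg_left (sum_prod_le_pow_card 0 (fun m => by positivity)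
          (sum_abs_int_rpow_neg_le hαp) u _ fun h hh j hj => ?_) (Real.rpow_nonneg (hγ u) _)
        rw [← (mem_filter.1 hh).2] at hj
        simpa [nonzeroCoords] using hj

end Korobov

theorem weighted_tail_bound_general (d : ℕ) (α lam : ℝ)
    (hlam1 : 1 / 2 < lam) (hlam2 : lam < α)
    (γ : Finset (Fin d) → ℝ) (hγ : ∀ u, 0 < γ u ∧ γ u ≤ 1)
    (r : (Fin d → ℤ) → ℝ)
    (hr : ∀ h : Fin d → ℤ,
      r h = (γ (Finset.univ.filter fun j => h j ≠ 0))⁻¹ *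
        ∏ j ∈ Finset.univ.filter (fun j => h j ≠ 0), ((|h j| : ℤ) : ℝ) ^ α)
    (M : ℝ) (hM : 0 < M) :
    (∑' h : {h : Fin d → ℤ // M < r h}, (r (h : Fin d → ℤ)) ^ (-2 : ℝ))
      ≤ M ^ (1 / lam - 2) * ∑ u : Finset (Fin d),
          γ u ^ (1 / lam) * (2 * ∑' m : ℕ, ((m : ℝ) + 1) ^ (-(α / lam))) ^ u.card := by
  obtain rfl : r = korobovR γ α := funext hr
  have hlam0 : 0 < lam := by linarith
  have hαlam : 1 < α * (1 / lam) := by rw [mul_one_div, one_lt_div hlam0]; exact hlam2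
  have hlam_inv : 1 / lam ≤ 2 := by rw [div_le_iff₀ hlam0]; linarith
  simpa only [mul_one_div] using tsum_rpow_neg_of_lt_le hM hlam_inv
    (sum_korobovR_rpow_neg_le (fun u => (hγ u).1.le) hαlam)

/-- Tail bound for the weighted Korobov sequence:
`∑_{r_{α,γ}(h) > M} r_{α,γ}(h)^{-2} ≤ M^{1/λ - 2} μ(λ)` where
`μ(λ) = ∑_{u ⊆ {1,…,d}} γ_u^{1/λ} (2 ζ(α/λ))^{|u|}`. -/
theorem weighted_tail_bound (d : ℕ) (α lam : ℝ)
    (hα : 1 / 2 < α) (hlam1 : 1 / 2 < lam) (hlam2 : lam < α)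
    (γ : Finset (Fin d) → ℝ) (hγ : ∀ u, 0 < γ u ∧ γ u ≤ 1)
    (r : (Fin d → ℤ) → ℝ)
    (hr : ∀ h : Fin d → ℤ,
      r h = (γ (Finset.univ.filter fun j => h j ≠ 0))⁻¹ *
        ∏ j ∈ Finset.univ.filter (fun j => h j ≠ 0), ((|h j| : ℤ) : ℝ) ^ α)
    (M : ℝ) (hM : 0 < M) :
    (∑' h : {h : Fin d → ℤ // M < r h}, (r (h : Fin d → ℤ)) ^ (-2 : ℝ))
      ≤ M ^ (1 / lam - 2) * ∑ u : Finset (Fin d),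
          γ u ^ (1 / lam) * (2 * ∑' m : ℕ, ((m : ℝ) + 1) ^ (-(α / lam))) ^ u.card :=
  weighted_tail_bound_general d α lam hlam1 hlam2 γ hγ r hr M hM
end
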